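/- arXiv:2103.08782 — 2 statements merged into one kernel-verified Lean document; each statement's English description precedes it below -/
import Mathlib

section
/- Let f : ℝⁿ → ℝ and c₁,…,c_m : ℝⁿ → ℝ be continuous, let F = {z : cᵢ(z) ≥ 0 for all i} be compact, and suppose the strict interior F° = {z : cᵢ(z) > 0 for all i} is nonempty with F equal to the closure of F°. For μ > 0 define the barrier function B_μ(z) = f(z) − μ Σᵢ ln(cᵢ(z)) on F°, and suppose for each μ > 0 there exists a minimiser z_μ of B_μ over F°. Then for any sequence μ_k → 0⁺, every limit point of (z_{μ_k}) is a global minimiser of f over F. -/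
/-!
Since `log x ≤ x - 1`, the log-barrier sum `∑ i, log (c i z)` is bounded above by some `S`
on the compact feasible set. Comparing a barrier minimiser `z_μ` with any strictly feasible `w`
then gives `f z_μ ≤ f w + μ (S - ∑ i, log (c i w))`, whose right-hand side tends to `f w` as
`μ → 0`; hence every limit point `z⋆` satisfies `f z⋆ ≤ f w` on `F°`, and by continuity on
`closure F° = F`.
-/

open Filter Set Finset

theorem exists_sum_log_le_of_isCompact {X ι : Type*} [TopologicalSpace X] [Fintype ι]
    {c : ι → X → ℝ} {K : Set X} (hK : IsCompact K) (hc : ∀ i, ContinuousOn (c i) K) :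
    ∃ S, ∀ x ∈ K, (∀ i, 0 < c i x) → ∑ i, Real.log (c i x) ≤ S := by
  obtain ⟨S, hS⟩ := hK.bddAbove_image (f := fun x => ∑ i, (c i x - 1)) <|
    continuousOn_finsetSum _ fun i _ => (hc i).sub continuousOn_const
  exact ⟨S, fun x hx hpos => (sum_le_sum fun i _ => Real.log_le_sub_one_of_pos (hpos i)).trans
    (hS (mem_image_of_mem _ hx))⟩

theorem le_of_mapClusterPt_of_eventually_le {α X Y : Type*} [TopologicalSpace X]
    [TopologicalSpace Y] [LinearOrder Y] [OrderClosedTopology Y] [DenselyOrdered Y]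
    {l : Filter α} {u : α → X} {x : X} {f : X → Y} {g : α → Y} {a : Y}
    (hf : Continuous f) (hx : MapClusterPt x l u) (hg : Tendsto g l (nhds a))
    (hfg : ∀ᶠ k in l, f (u k) ≤ g k) : f x ≤ a :=
  le_of_forall_gt_imp_ge_of_dense fun _ hab =>
    (isClosed_Iic.preimage hf).mem_of_mapClusterPt hx <|
      (hfg.and (hg.eventually_lt_const hab)).mono fun _ hk => hk.1.trans hk.2.le

theorem barrier_method_convergence_general (n m : ℕ)
    (f : (Fin n → ℝ) → ℝ) (hf : Continuous f)
    (c : Fin m → (Fin n → ℝ) → ℝ) (hc : ∀ i, Continuous (c i))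
    (F : Set (Fin n → ℝ)) (hFcompact : IsCompact F)
    (Fint : Set (Fin n → ℝ)) (hFint : Fint = {z | ∀ i, 0 < c i z})
    (hFcl : F = closure Fint)
    (B : ℝ → (Fin n → ℝ) → ℝ)
    (hB : ∀ μ z, B μ z = f z - μ * ∑ i : Fin m, Real.log (c i z))
    (zmin : ℝ → (Fin n → ℝ))
    (hzmin : ∀ μ : ℝ, 0 < μ → zmin μ ∈ Fint ∧ ∀ z ∈ Fint, B μ (zmin μ) ≤ B μ z)
    (μ : ℕ → ℝ) (hμpos : ∀ k, 0 < μ k) (hμlim : Tendsto μ atTop (nhds 0))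
    (zstar : Fin n → ℝ) (hcluster : MapClusterPt zstar atTop (fun k => zmin (μ k))) :
    zstar ∈ F ∧ ∀ z ∈ F, f zstar ≤ f z := by
  subst hFint hFcl
  have hzint : ∀ k, zmin (μ k) ∈ {z | ∀ i, 0 < c i z} := fun k => (hzmin _ (hμpos k)).1
  refine ⟨hFcompact.isClosed.mem_of_mapClusterPt hcluster
    (Eventually.of_forall fun k => subset_closure (hzint k)), ?_⟩
  obtain ⟨S, hS⟩ := exists_sum_log_le_of_isCompact hFcompact fun i => (hc i).continuousOn
  have hle_int : ∀ w ∈ {z | ∀ i, 0 < c i z}, f zstar ≤ f w := by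
    intro w hw
    set C := S - ∑ i, Real.log (c i w)
    refine le_of_mapClusterPt_of_eventually_le (g := fun k => f w + μ k * C) hf hcluster
      (by simpa using (hμlim.mul_const C).const_add (f w)) (Eventually.of_forall fun k => ?_)
    have hmin := (hzmin _ (hμpos k)).2 w hw
    rw [hB, hB] at hmin
    have hlog := hS _ (subset_closure (hzint k)) (hzint k)
    nlinarith [hμpos k]
  exact fun z hz => le_on_closure hle_int continuousOn_const hf.continuousOn hz

/-- Fiacco–McCormick barrier convergence: let `f` and the constraint functions `c i` be
continuous, let the feasible set `F = {z | ∀ i, c i z ≥ 0}` be compact, and suppose the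
strict interior `F° = {z | ∀ i, c i z > 0}` is nonempty with `F = closure F°`. If for
each barrier weight `μ > 0` the barrier function `B_μ(z) = f z − μ ∑ i, log (c i z)` has a
minimiser `zmin μ ∈ F°`, then for any sequence `μ k → 0` of positive weights, every limit
point of `k ↦ zmin (μ k)` is a global minimiser of `f` over `F`. -/
theorem barrier_method_convergence (n m : ℕ)
    (f : (Fin n → ℝ) → ℝ) (hf : Continuous f)
    (c : Fin m → (Fin n → ℝ) → ℝ) (hc : ∀ i, Continuous (c i))
    (F : Set (Fin n → ℝ)) (hF : F = {z | ∀ i, 0 ≤ c i z}) (hFcompact : IsCompact F)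
    (Fint : Set (Fin n → ℝ)) (hFint : Fint = {z | ∀ i, 0 < c i z})
    (hFne : Fint.Nonempty) (hFcl : F = closure Fint)
    (B : ℝ → (Fin n → ℝ) → ℝ)
    (hB : ∀ μ z, B μ z = f z - μ * ∑ i : Fin m, Real.log (c i z))
    (zmin : ℝ → (Fin n → ℝ))
    (hzmin : ∀ μ : ℝ, 0 < μ → zmin μ ∈ Fint ∧ ∀ z ∈ Fint, B μ (zmin μ) ≤ B μ z)
    (μ : ℕ → ℝ) (hμpos : ∀ k, 0 < μ k) (hμlim : Tendsto μ atTop (nhds 0))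
    (zstar : Fin n → ℝ) (hcluster : MapClusterPt zstar atTop (fun k => zmin (μ k))) :
    zstar ∈ F ∧ ∀ z ∈ F, f zstar ≤ f z :=
  barrier_method_convergence_general n m f hf c hc F hFcompact Fint hFint hFcl B hB zmin hzmin μ
    hμpos hμlim zstar hcluster
end

section
/- With the notation of the barrier method (f, cᵢ continuous, B_μ(z) = f(z) − μ Σᵢ ln(cᵢ(z)) minimised over the strictly feasible set F° = {z : cᵢ(z) > 0 for all i}), let 0 < μ₁ < μ₂ and let z_{μ₁}, z_{μ₂} be minimisers of B_{μ₁}, B_{μ₂} over F° respectively. Then f(z_{μ₁}) ≤ f(z_{μ₂}); i.e., the objective value at the barrier minimiser is monotonically non-increasing as the barrier weight μ decreases. -/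
open Set Finset

section PenaltyPath

variable {α : Type*} {f g : α → ℝ} {s : Set α} {μ₁ μ₂ : ℝ} {x₁ x₂ : α}

/-- Adding the two optimality inequalities cancels `f` and leaves `(μ₂ - μ₁) (g x₁ - g x₂) ≤ 0`. -/
theorem penalty_le_of_isMinOn (hμ : μ₁ < μ₂) (hx₁ : x₁ ∈ s) (hx₂ : x₂ ∈ s)
    (h₁ : IsMinOn (fun z ↦ f z - μ₁ * g z) s x₁) (h₂ : IsMinOn (fun z ↦ f z - μ₂ * g z) s x₂) :
    g x₁ ≤ g x₂ := by
  have opt₁ : f x₁ - μ₁ * g x₁ ≤ f x₂ - μ₁ * g x₂ := h₁ hx₂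
  have opt₂ : f x₂ - μ₂ * g x₂ ≤ f x₁ - μ₂ * g x₁ := h₂ hx₁
  have : (μ₂ - μ₁) * (g x₁ - g x₂) ≤ 0 := by linarith
  nlinarith

theorem objective_le_of_isMinOn (hμ₁ : 0 ≤ μ₁) (hμ : μ₁ < μ₂) (hx₁ : x₁ ∈ s) (hx₂ : x₂ ∈ s)
    (h₁ : IsMinOn (fun z ↦ f z - μ₁ * g z) s x₁) (h₂ : IsMinOn (fun z ↦ f z - μ₂ * g z) s x₂) :
    f x₁ ≤ f x₂ := by
  have opt₁ : f x₁ - μ₁ * g x₁ ≤ f x₂ - μ₁ * g x₂ := h₁ hx₂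
  have hg : μ₁ * g x₁ ≤ μ₁ * g x₂ :=
    mul_le_mul_of_nonneg_left (penalty_le_of_isMinOn hμ hx₁ hx₂ h₁ h₂) hμ₁
  linarith

end PenaltyPath

theorem barrier_objective_monotone_general (n m : ℕ)
    (f : (Fin n → ℝ) → ℝ)
    (c : Fin m → (Fin n → ℝ) → ℝ)
    (Fint : Set (Fin n → ℝ))
    (B : ℝ → (Fin n → ℝ) → ℝ)
    (hB : ∀ μ z, B μ z = f z - μ * ∑ i : Fin m, Real.log (c i z))
    (μ₁ μ₂ : ℝ) (hμ₁ : 0 < μ₁) (hμ₁₂ : μ₁ < μ₂)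
    (z₁ z₂ : Fin n → ℝ)
    (hz₁ : z₁ ∈ Fint ∧ ∀ z ∈ Fint, B μ₁ z₁ ≤ B μ₁ z)
    (hz₂ : z₂ ∈ Fint ∧ ∀ z ∈ Fint, B μ₂ z₂ ≤ B μ₂ z) :
    f z₁ ≤ f z₂ := by
  obtain ⟨hz₁F, hz₁min⟩ := hz₁
  obtain ⟨hz₂F, hz₂min⟩ := hz₂
  have hB' : ∀ μ, B μ = fun z ↦ f z - μ * ∑ i : Fin m, Real.log (c i z) := fun μ ↦ funext (hB μ)
  have isMin₁ := isMinOn_iff.mpr hz₁min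
  have isMin₂ := isMinOn_iff.mpr hz₂min
  rw [hB'] at isMin₁ isMin₂
  exact objective_le_of_isMinOn hμ₁.le hμ₁₂ hz₁F hz₂F isMin₁ isMin₂

/-- Monotonicity of the objective along the barrier path: if `z₁` and `z₂` minimise the
barrier functions `B_{μ₁}` and `B_{μ₂}` over the strictly feasible set
`F° = {z | ∀ i, c i z > 0}` for barrier weights `0 < μ₁ < μ₂`, then `f z₁ ≤ f z₂`. -/
theorem barrier_objective_monotone (n m : ℕ)
    (f : (Fin n → ℝ) → ℝ) (hf : Continuous f)
    (c : Fin m → (Fin n → ℝ) → ℝ) (hc : ∀ i, Continuous (c i))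
    (Fint : Set (Fin n → ℝ)) (hFint : Fint = {z | ∀ i, 0 < c i z})
    (B : ℝ → (Fin n → ℝ) → ℝ)
    (hB : ∀ μ z, B μ z = f z - μ * ∑ i : Fin m, Real.log (c i z))
    (μ₁ μ₂ : ℝ) (hμ₁ : 0 < μ₁) (hμ₁₂ : μ₁ < μ₂)
    (z₁ z₂ : Fin n → ℝ)
    (hz₁ : z₁ ∈ Fint ∧ ∀ z ∈ Fint, B μ₁ z₁ ≤ B μ₁ z)
    (hz₂ : z₂ ∈ Fint ∧ ∀ z ∈ Fint, B μ₂ z₂ ≤ B μ₂ z) :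
    f z₁ ≤ f z₂ :=
  barrier_objective_monotone_general n m f c Fint B hB μ₁ μ₂ hμ₁ hμ₁₂ z₁ z₂ hz₁ hz₂
end
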